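/- Let L be a Lie algebra over a field, with universal Lie pairings h: L × L → L⊗L and h̄: (L/L²) × (L/L²) → (L/L²)⊗(L/L²), and let π: L⊗L → (L/L²)⊗(L/L²) be the natural epimorphism. Then Ker π = L⊗L² + L²⊗L, where L⊗L² denotes the submodule of L⊗L spanned by {l⊗m : l ∈ L, m ∈ L²} and L²⊗L the submodule spanned by {m⊗l : m ∈ L², l ∈ L}; moreover L⊗L² + L²⊗L = L⊗L². -/

import Mathlib

/-!
Since `h̄` vanishes as soon as one argument lies in `L²`, `π` kills `L⊗L²`. By the pairing
relations, `[a,b]⊗l = a⊗[b,l] - b⊗[a,l]` lies in `L⊗L²`, and `[l⊗l', k⊗k'] = -([l',l]⊗[k,k'])`,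
so `L⊗L²` contains `L²⊗L` and, as the `l⊗l'` span `L⊗L`, is an ideal. Hence `h` descends to a Lie
pairing `L/L² × L/L² → (L⊗L)/(L⊗L²)`, and the universal property of `h̄` yields a map back
whose composite with `π` is the quotient map; so `Ker π ⊆ L⊗L²`.
-/

universe u v w x

/-- A Lie pairing `ρ : L × L → H` of Lie algebras over a field `F`:
a bilinear map satisfying the three Lie-pairing relations. -/
structure IsLiePairing (F : Type u) [Field F] {L : Type v} {H : Type w}
    [LieRing L] [LieAlgebra F L] [LieRing H] [LieAlgebra F H]
    (ρ : L → L → H) : Prop where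
  add_left : ∀ l l' k : L, ρ (l + l') k = ρ l k + ρ l' k
  add_right : ∀ l k k' : L, ρ l (k + k') = ρ l k + ρ l k'
  smul_left : ∀ (c : F) (l k : L), ρ (c • l) k = c • ρ l k
  smul_right : ∀ (c : F) (l k : L), ρ l (c • k) = c • ρ l k
  bracket_left : ∀ l l' s : L, ρ ⁅l, l'⁆ s = ρ l ⁅l', s⁆ - ρ l' ⁅l, s⁆
  bracket_right : ∀ l s s' : L, ρ l ⁅s, s'⁆ = ρ ⁅s', l⁆ s - ρ ⁅s, l⁆ s'
  bracket_bracket : ∀ l s l' s' : L, ρ ⁅l, s⁆ ⁅l', s'⁆ = -⁅ρ s l, ρ l' s'⁆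

/-- `h : L × L → T` is a universal Lie pairing: `T` plays the role of the
nonabelian tensor square `L ⊗ L`, with `h l l' = l ⊗ l'`. -/
structure IsUniversalLiePairing (F : Type u) [Field F] (L : Type v) (T : Type w)
    [LieRing L] [LieAlgebra F L] [LieRing T] [LieAlgebra F T]
    (h : L → L → T) : Prop where
  isLiePairing : IsLiePairing F h
  universal : ∀ (Q : Type (max u v w)) [LieRing Q] [LieAlgebra F Q]
      (h' : L → L → Q), IsLiePairing F h' →
        ∃! ζ : T →ₗ⁅F⁆ Q, ∀ x y : L, ζ (h x y) = h' x y

theorem small_of_span_range_eq_top.{t} {R M ι : Type*} [Ring R] [AddCommGroup M] [Module R M]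
    [Small.{t} R] [Small.{t} ι] {f : ι → M} (hf : Submodule.span R (Set.range f) = ⊤) :
    Small.{t} M := by
  have := Submodule.small_span (R := R) (Set.range f)
  rw [hf] at this
  exact small_map (Submodule.topEquiv (R := R) (M := M)).symm.toEquiv

namespace IsLiePairing

variable {F : Type u} [Field F] {L : Type v} {H : Type w} {H' : Type x}
  [LieRing L] [LieAlgebra F L] [LieRing H] [LieAlgebra F H] [LieRing H'] [LieAlgebra F H']
  {ρ : L → L → H}

def toLinearMap₂ (hρ : IsLiePairing F ρ) : L →ₗ[F] L →ₗ[F] H :=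
  LinearMap.mk₂ F ρ hρ.add_left hρ.smul_left hρ.add_right hρ.smul_right

@[simp] lemma toLinearMap₂_apply (hρ : IsLiePairing F ρ) (l k : L) : hρ.toLinearMap₂ l k = ρ l k := rfl

lemma comp (hρ : IsLiePairing F ρ) (f : H →ₗ⁅F⁆ H') : IsLiePairing F (fun a b => f (ρ a b)) where
  add_left l l' k := by rw [hρ.add_left, map_add]
  add_right l k k' := by rw [hρ.add_right, map_add]
  smul_left c l k := by rw [hρ.smul_left, map_smul]
  smul_right c l k := by rw [hρ.smul_right, map_smul]
  bracket_left l l' s := by rw [hρ.bracket_left, map_sub]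
  bracket_right l s s' := by rw [hρ.bracket_right, map_sub]
  bracket_bracket l s l' s' := by rw [hρ.bracket_bracket, map_neg, LieHom.map_lie]

lemma of_comp_injective {ρ : L → L → H'} {f : H →ₗ⁅F⁆ H'} (hf : Function.Injective f)
    {σ : L → L → H} (hσ : ∀ a b, f (σ a b) = ρ a b) (hρ : IsLiePairing F ρ) :
    IsLiePairing F σ where
  add_left l l' k := hf <| by simp only [hσ, map_add, hρ.add_left]
  add_right l k k' := hf <| by simp only [hσ, map_add, hρ.add_right]
  smul_left c l k := hf <| by simp only [hσ, map_smul, hρ.smul_left]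
  smul_right c l k := hf <| by simp only [hσ, map_smul, hρ.smul_right]
  bracket_left l l' s := hf <| by simp only [hσ, map_sub, hρ.bracket_left]
  bracket_right l s s' := hf <| by simp only [hσ, map_sub, hρ.bracket_right]
  bracket_bracket l s l' s' := hf <| by simp only [hσ, map_neg, LieHom.map_lie, hρ.bracket_bracket]

lemma lie_mem_span_derived (hρ : IsLiePairing F ρ) {y z : H}
    (hy : y ∈ Submodule.span F (Set.range (Function.uncurry ρ)))
    (hz : z ∈ Submodule.span F (Set.range (Function.uncurry ρ))) :
    ⁅y, z⁆ ∈ Submodule.span F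
      {t : H | ∃ l m : L, m ∈ ⁅(⊤ : LieIdeal F L), (⊤ : LieIdeal F L)⁆ ∧ t = ρ l m} := by
  have hyz := Submodule.apply_mem_map₂ (LieModule.toEnd F H H : H →ₗ[F] Module.End F H) hy hz
  rw [Submodule.map₂_span_span] at hyz
  refine Submodule.span_le.mpr ?_ hyz
  rintro _ ⟨_, ⟨⟨a, b⟩, rfl⟩, _, ⟨⟨c, d⟩, rfl⟩, rfl⟩
  have hbracket : ⁅ρ a b, ρ c d⁆ = -ρ ⁅b, a⁆ ⁅c, d⁆ := by rw [hρ.bracket_bracket, neg_neg]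
  change ⁅ρ a b, ρ c d⁆ ∈ Submodule.span F _
  rw [hbracket]
  exact neg_mem <| Submodule.subset_span
    ⟨⁅b, a⁆, ⁅c, d⁆, LieSubmodule.lie_mem_lie (LieSubmodule.mem_top c) (LieSubmodule.mem_top d), rfl⟩

lemma apply_mem_span_of_left_mem_derived (hρ : IsLiePairing F ρ) {m : L}
    (hm : m ∈ ⁅(⊤ : LieIdeal F L), (⊤ : LieIdeal F L)⁆) (l : L) :
    ρ m l ∈ Submodule.span F
      {t : H | ∃ l m : L, m ∈ ⁅(⊤ : LieIdeal F L), (⊤ : LieIdeal F L)⁆ ∧ t = ρ l m} := by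
  have hmem : ∀ a b : L, ⁅a, b⁆ ∈ ⁅(⊤ : LieIdeal F L), (⊤ : LieIdeal F L)⁆ := fun a b =>
    LieSubmodule.lie_mem_lie (LieSubmodule.mem_top a) (LieSubmodule.mem_top b)
  suffices h : (⁅(⊤ : LieIdeal F L), (⊤ : LieIdeal F L)⁆ : LieIdeal F L).toSubmodule ≤
      (Submodule.span F _).comap (hρ.toLinearMap₂.flip l) from h hm
  rw [LieSubmodule.lieIdeal_oper_eq_linear_span', Submodule.span_le]
  rintro _ ⟨a, -, b, -, rfl⟩
  simp only [SetLike.mem_coe, Submodule.mem_comap, LinearMap.flip_apply, toLinearMap₂_apply,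
    hρ.bracket_left]
  exact sub_mem (Submodule.subset_span ⟨a, _, hmem b l, rfl⟩)
    (Submodule.subset_span ⟨b, _, hmem a l, rfl⟩)

def liftQ (hρ : IsLiePairing F ρ) (J : LieIdeal F L) (I : LieIdeal F H)
    (hl : ∀ l m, m ∈ J → ρ l m ∈ I) (hr : ∀ m l, m ∈ J → ρ m l ∈ I) :
    L ⧸ J → L ⧸ J → H ⧸ I :=
  fun a b => (hρ.toLinearMap₂.compr₂ I.toSubmodule.mkQ).liftQ₂ J.toSubmodule J.toSubmodule
    (fun m hm => LinearMap.ext fun l => (Submodule.Quotient.mk_eq_zero _).mpr (hr m l hm))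
    (fun m hm => LinearMap.ext fun l => (Submodule.Quotient.mk_eq_zero _).mpr (hl l m hm)) a b

@[simp] lemma liftQ_mk (hρ : IsLiePairing F ρ) {J : LieIdeal F L} {I : LieIdeal F H}
    {hl : ∀ l m, m ∈ J → ρ l m ∈ I} {hr : ∀ m l, m ∈ J → ρ m l ∈ I} (a b : L) :
    hρ.liftQ J I hl hr (LieSubmodule.Quotient.mk a) (LieSubmodule.Quotient.mk b) =
      LieSubmodule.Quotient.mk (ρ a b) := rfl

lemma isLiePairing_liftQ (hρ : IsLiePairing F ρ) (J : LieIdeal F L) (I : LieIdeal F H)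
    (hl : ∀ l m, m ∈ J → ρ l m ∈ I) (hr : ∀ m l, m ∈ J → ρ m l ∈ I) :
    IsLiePairing F (hρ.liftQ J I hl hr) where
  add_left _ _ _ := LinearMap.map_add₂ _ _ _ _
  add_right _ _ _ := map_add _ _ _
  smul_left _ _ _ := LinearMap.map_smul₂ _ _ _ _
  smul_right _ _ _ := map_smul _ _ _
  bracket_left a a' s := by
    obtain ⟨a, rfl⟩ := LieSubmodule.Quotient.surjective_mk' J a
    obtain ⟨a', rfl⟩ := LieSubmodule.Quotient.surjective_mk' J a'
    obtain ⟨s, rfl⟩ := LieSubmodule.Quotient.surjective_mk' J s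
    simp only [LieSubmodule.Quotient.mk'_apply, ← LieSubmodule.Quotient.mk_bracket, liftQ_mk,
      hρ.bracket_left]
    rfl
  bracket_right a s s' := by
    obtain ⟨a, rfl⟩ := LieSubmodule.Quotient.surjective_mk' J a
    obtain ⟨s, rfl⟩ := LieSubmodule.Quotient.surjective_mk' J s
    obtain ⟨s', rfl⟩ := LieSubmodule.Quotient.surjective_mk' J s'
    simp only [LieSubmodule.Quotient.mk'_apply, ← LieSubmodule.Quotient.mk_bracket, liftQ_mk,
      hρ.bracket_right]
    rfl
  bracket_bracket a s a' s' := by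
    obtain ⟨a, rfl⟩ := LieSubmodule.Quotient.surjective_mk' J a
    obtain ⟨s, rfl⟩ := LieSubmodule.Quotient.surjective_mk' J s
    obtain ⟨a', rfl⟩ := LieSubmodule.Quotient.surjective_mk' J a'
    obtain ⟨s', rfl⟩ := LieSubmodule.Quotient.surjective_mk' J s'
    simp only [LieSubmodule.Quotient.mk'_apply, ← LieSubmodule.Quotient.mk_bracket, liftQ_mk,
      hρ.bracket_bracket]
    rfl

end IsLiePairing

namespace IsUniversalLiePairing

variable {F : Type u} [Field F] {L : Type v} {T : Type w}
  [LieRing L] [LieAlgebra F L] [LieRing T] [LieAlgebra F T] {h : L → L → T}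

-- The universal property is only postulated for targets in `Type (max u v w)`; it transfers
-- to every small target along a transported Lie algebra structure.
theorem existsUnique_of_small (hh : IsUniversalLiePairing F L T h) {Q : Type*} [LieRing Q]
    [LieAlgebra F Q] [Small.{max u v w} Q] {ρ : L → L → Q} (hρ : IsLiePairing F ρ) :
    ∃! ζ : T →ₗ⁅F⁆ Q, ∀ x y : L, ζ (h x y) = ρ x y := by
  obtain ⟨S, ⟨e⟩⟩ := Small.equiv_small (α := Q)
  let := e.symm.lieRing
  let := e.symm.lieAlgebra F
  let φ : S ≃ₗ⁅F⁆ Q := e.symm.lieEquiv F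
  obtain ⟨ζ, hζ, huniq⟩ := hh.universal S _ (hρ.comp φ.symm.toLieHom)
  refine ⟨φ.toLieHom.comp ζ, fun x y => by simp [hζ], fun ζ' hζ' => ?_⟩
  have := huniq (φ.symm.toLieHom.comp ζ') fun x y => by simp [hζ']
  ext t
  simp [← this]

-- The span of the `h l l'` is a subalgebra, and universality makes its inclusion split.
theorem span_range_eq_top (hh : IsUniversalLiePairing F L T h) :
    Submodule.span F (Set.range (Function.uncurry h)) = ⊤ := by
  let S : LieSubalgebra F T :=
    { Submodule.span F (Set.range (Function.uncurry h)) with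
      lie_mem' := fun hy hz =>
        Submodule.span_mono (by rintro _ ⟨l, m, -, rfl⟩; exact ⟨(l, m), rfl⟩)
          (hh.isLiePairing.lie_mem_span_derived hy hz) }
  let h' : L → L → S := fun a b => ⟨h a b, Submodule.subset_span ⟨(a, b), rfl⟩⟩
  have hp' : IsLiePairing F h' :=
    IsLiePairing.of_comp_injective (f := S.incl) Subtype.val_injective (fun _ _ => rfl)
      hh.isLiePairing
  obtain ⟨ζ, hζ, -⟩ := hh.existsUnique_of_small hp'
  have hret : S.incl.comp ζ = LieHom.id :=
    (hh.existsUnique_of_small hh.isLiePairing).unique (fun x y => by simp [hζ, h'])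
      (fun _ _ => rfl)
  refine eq_top_iff.mpr fun t _ => ?_
  rw [← LieHom.id_apply (R := F) t, ← hret]
  exact (ζ t).2

theorem lie_mem_span_derived (hh : IsUniversalLiePairing F L T h) (y z : T) :
    ⁅y, z⁆ ∈ Submodule.span F
      {t : T | ∃ l m : L, m ∈ ⁅(⊤ : LieIdeal F L), (⊤ : LieIdeal F L)⁆ ∧ t = h l m} :=
  hh.isLiePairing.lie_mem_span_derived (by simp [hh.span_range_eq_top])
    (by simp [hh.span_range_eq_top])

theorem small (hh : IsUniversalLiePairing F L T h) : Small.{max u v} T :=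
  small_of_span_range_eq_top hh.span_range_eq_top

variable {T2 : Type x} [LieRing T2] [LieAlgebra F T2]

theorem ker_le (hh : IsUniversalLiePairing F L T h) {J : LieIdeal F L} {h2 : L ⧸ J → L ⧸ J → T2}
    (hh2 : IsUniversalLiePairing F (L ⧸ J) T2 h2) (π : T →ₗ⁅F⁆ T2)
    (hπ : ∀ l l' : L, π (h l l') =
      h2 (LieSubmodule.Quotient.mk l) (LieSubmodule.Quotient.mk l'))
    (I : LieIdeal F T) (hl : ∀ l m, m ∈ J → h l m ∈ I) (hr : ∀ m l, m ∈ J → h m l ∈ I) :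
    π.ker ≤ I := by
  have := hh.small
  have : Small.{max u v x} T := small_lift T
  have : Small.{max u v x} (T ⧸ I) := small_of_surjective (LieSubmodule.Quotient.surjective_mk' I)
  obtain ⟨ζ, hζ, -⟩ := hh2.existsUnique_of_small (hh.isLiePairing.isLiePairing_liftQ J I hl hr)
  have hcomp : ((ζ.comp π : T →ₗ⁅F⁆ T ⧸ I) : T →ₗ[F] T ⧸ I) = LieSubmodule.Quotient.mk' I := by
    refine LinearMap.ext_on_range hh.span_range_eq_top fun ⟨l, l'⟩ => ?_
    simp [hπ, hζ]
  intro t ht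
  have hmk := LinearMap.congr_fun hcomp t
  simp only [LieHom.coe_toLinearMap, LieHom.comp_apply, LieHom.mem_ker.mp ht, map_zero,
    LieModuleHom.coe_toLinearMap] at hmk
  exact (LieSubmodule.Quotient.mk_eq_zero _).mp hmk.symm

end IsUniversalLiePairing

/-- For the natural epimorphism `π : L⊗L → (L/L²)⊗(L/L²)` one has
`Ker π = L⊗L² + L²⊗L`, and moreover `L⊗L² + L²⊗L = L⊗L²`, where `L⊗L²`
(resp. `L²⊗L`) is the submodule of `L⊗L` spanned by the `l⊗m` (resp. `m⊗l`)
with `m ∈ L²`. -/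
theorem ker_natural_epimorphism (F : Type u) [Field F]
    (L : Type v) [LieRing L] [LieAlgebra F L]
    (T : Type w) [LieRing T] [LieAlgebra F T]
    (h : L → L → T) (hh : IsUniversalLiePairing F L T h)
    (T2 : Type x) [LieRing T2] [LieAlgebra F T2]
    (h2 : (L ⧸ ⁅(⊤ : LieIdeal F L), (⊤ : LieIdeal F L)⁆) →
      (L ⧸ ⁅(⊤ : LieIdeal F L), (⊤ : LieIdeal F L)⁆) → T2)
    (hh2 : IsUniversalLiePairing F
      (L ⧸ ⁅(⊤ : LieIdeal F L), (⊤ : LieIdeal F L)⁆) T2 h2)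
    (π : T →ₗ⁅F⁆ T2)
    (hπ : ∀ l l' : L, π (h l l') =
      h2 (LieSubmodule.Quotient.mk (N := ⁅(⊤ : LieIdeal F L), (⊤ : LieIdeal F L)⁆) l)
         (LieSubmodule.Quotient.mk (N := ⁅(⊤ : LieIdeal F L), (⊤ : LieIdeal F L)⁆) l')) :
    (π.ker : Submodule F T) =
        Submodule.span F
          {z : T | ∃ l m : L, m ∈ ⁅(⊤ : LieIdeal F L), (⊤ : LieIdeal F L)⁆ ∧ z = h l m} ⊔
        Submodule.span F
          {z : T | ∃ m l : L, m ∈ ⁅(⊤ : LieIdeal F L), (⊤ : LieIdeal F L)⁆ ∧ z = h m l} ∧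
      Submodule.span F
          {z : T | ∃ l m : L, m ∈ ⁅(⊤ : LieIdeal F L), (⊤ : LieIdeal F L)⁆ ∧ z = h l m} ⊔
        Submodule.span F
          {z : T | ∃ m l : L, m ∈ ⁅(⊤ : LieIdeal F L), (⊤ : LieIdeal F L)⁆ ∧ z = h m l} =
      Submodule.span F
          {z : T | ∃ l m : L, m ∈ ⁅(⊤ : LieIdeal F L), (⊤ : LieIdeal F L)⁆ ∧ z = h l m} := by
  set A := Submodule.span F
    {z : T | ∃ l m : L, m ∈ ⁅(⊤ : LieIdeal F L), (⊤ : LieIdeal F L)⁆ ∧ z = h l m}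
  set B := Submodule.span F
    {z : T | ∃ m l : L, m ∈ ⁅(⊤ : LieIdeal F L), (⊤ : LieIdeal F L)⁆ ∧ z = h m l}
  have hBA : B ≤ A := Submodule.span_le.mpr <| by
    rintro _ ⟨m, l, hm, rfl⟩
    exact hh.isLiePairing.apply_mem_span_of_left_mem_derived hm l
  have hAker : A ≤ (π.ker : Submodule F T) := Submodule.span_le.mpr <| by
    rintro _ ⟨l, m, hm, rfl⟩
    change h l m ∈ π.ker
    rw [LieHom.mem_ker, hπ, LieSubmodule.Quotient.mk_eq_zero'.mpr hm]
    exact map_zero (hh2.isLiePairing.toLinearMap₂ _)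
  let I : LieIdeal F T := { A with lie_mem := fun {y z} _ => hh.lie_mem_span_derived y z }
  have hkerA : (π.ker : Submodule F T) ≤ A :=
    hh.ker_le hh2 π hπ I (fun l m hm => Submodule.subset_span ⟨l, m, hm, rfl⟩)
      (fun m l hm => hBA (Submodule.subset_span ⟨m, l, hm, rfl⟩))
  exact ⟨le_antisymm (hkerA.trans le_sup_left) (sup_le hAker (hBA.trans hAker)),
    sup_eq_left.mpr hBA⟩
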